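/- Let f, h ∈ ℂ[[x,y]] be nonzero formal power series, let λ ∈ ℝ≥0² be a vector with nonnegative coordinates, and let ξ > 0 be a rational number. Then the translated Newton polygon 𝒩(h) + λ is contained in the interior of the dilated Newton polygon ξ·𝒩(f) if and only if for every nonzero vector v ∈ ℝ≥0² one has ord_v(h) + ⟨v,λ⟩ > ξ·ord_v(f). -/

import Mathlib

open scoped Pointwise

noncomputable section

/-- The standard inner (dot) product on ℝ². -/
def dot2 (v u : ℝ × ℝ) : ℝ := v.1 * u.1 + v.2 * u.2

/-- The nonnegative quadrant ℝ≥0² in ℝ². -/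
def quadrant2 : Set (ℝ × ℝ) := {u | 0 ≤ u.1 ∧ 0 ≤ u.2}

/-- The support of a power series f ∈ ℂ[[x,y]], viewed as a subset of ℝ². -/
def psupp (f : MvPowerSeries (Fin 2) ℂ) : Set (ℝ × ℝ) :=
  {p | ∃ d : Fin 2 →₀ ℕ, MvPowerSeries.coeff d f ≠ 0 ∧ p = ((d 0 : ℝ), (d 1 : ℝ))}

/-- The Newton polygon 𝒩(f) = conv(supp f) + ℝ≥0². -/
def newtonPoly (f : MvPowerSeries (Fin 2) ℂ) : Set (ℝ × ℝ) :=
  convexHull ℝ (psupp f) + quadrant2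

/-- The support function Φ_{𝒩(f)}(v) = inf{⟨v,u⟩ : u ∈ 𝒩(f)}. -/
def suppFn (f : MvPowerSeries (Fin 2) ℂ) (v : ℝ × ℝ) : ℝ :=
  sInf (dot2 v '' newtonPoly f)

/-- The monomial order ord_v(f) = min{⟨v,d⟩ : d ∈ supp f}. -/
def ordV (v : ℝ × ℝ) (f : MvPowerSeries (Fin 2) ℂ) : ℝ :=
  sInf (dot2 v '' psupp f)

/-!
Both sides compare the convex upper set `C = ξ • 𝒩(f)` with the points `w + λ`, `w ∈ 𝒩(h)`,
through the linear forms `⟨v, ·⟩` with `v ≥ 0`: their infimum is `ξ * ord_v(f)` on `C` and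
`ord_v(h)` on `𝒩(h)`, attained on the supports by Dickson's lemma. If `w + λ` is interior to `C`,
a small step from it in direction `-v` stays in `C`, which makes the inequality strict. If it is
not, a supporting line of `C` through it (Hahn–Banach, `C` having nonempty interior) yields a
`v ≠ 0`, necessarily `≥ 0` since `C` is an upper set, with `⟨v, w + λ⟩ ≤ ξ * ord_v(f)`.
-/

lemma nonneg_of_forall_le_add_mul {K : Type*} [Field K] [LinearOrder K] [IsStrictOrderedRing K]
    {a b M : K} (h : ∀ t, 0 ≤ t → M ≤ a + t * b) : 0 ≤ b := by
  by_contra! hb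
  have key : (a - M + 1) / -b * b = -(a - M + 1) := by
    rw [div_mul_eq_mul_div, mul_div_assoc, div_neg, div_self hb.ne, mul_neg, mul_one]
  have ha : M ≤ a := by simpa using h 0 le_rfl
  linarith [h ((a - M + 1) / -b) (div_nonneg (by linarith) (by linarith)), key]

lemma IsUpperSet.smul_of_pos {s : Set (ℝ × ℝ)} (hs : IsUpperSet s) {c : ℝ} (hc : 0 < c) :
    IsUpperSet (c • s) := by
  simpa [← Set.image_smul] using hs.image (OrderIso.smulRight (β := ℝ × ℝ) hc)

lemma IsUpperSet.interior_nonempty {s : Set (ℝ × ℝ)} (hs : IsUpperSet s) (hne : s.Nonempty) :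
    (interior s).Nonempty := by
  obtain ⟨p, hp⟩ := hne
  have hbox : Set.Ioi p.1 ×ˢ Set.Ioi p.2 ⊆ s :=
    fun q hq => hs (Prod.le_def.2 ⟨le_of_lt hq.1, le_of_lt hq.2⟩) hp
  exact ⟨p + (1, 1), interior_maximal hbox (isOpen_Ioi.prod isOpen_Ioi) (by simp)⟩

lemma mem_quadrant2_iff {q : ℝ × ℝ} : q ∈ quadrant2 ↔ 0 ≤ q := by
  rw [Prod.le_def]; rfl

lemma dot2_add_right (v a b : ℝ × ℝ) : dot2 v (a + b) = dot2 v a + dot2 v b := by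
  simp only [dot2, Prod.fst_add, Prod.snd_add]; ring

lemma dot2_smul_right (v : ℝ × ℝ) (c : ℝ) (a : ℝ × ℝ) : dot2 v (c • a) = c * dot2 v a := by
  simp only [dot2, Prod.smul_fst, Prod.smul_snd, smul_eq_mul]; ring

lemma dot2_neg_left (v a : ℝ × ℝ) : dot2 (-v) a = -dot2 v a := by
  simp only [dot2, Prod.fst_neg, Prod.snd_neg]; ring

lemma dot2_nonneg {v u : ℝ × ℝ} (hv : v ∈ quadrant2) (hu : u ∈ quadrant2) : 0 ≤ dot2 v u :=
  add_nonneg (mul_nonneg hv.1 hu.1) (mul_nonneg hv.2 hu.2)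

lemma dot2_self_pos {v : ℝ × ℝ} (hv : v ≠ 0) : 0 < dot2 v v := by
  have hcoord : v.1 ≠ 0 ∨ v.2 ≠ 0 := by
    by_contra! h
    exact hv (Prod.ext h.1 h.2)
  unfold dot2
  rcases hcoord with h | h <;> nlinarith [mul_self_pos.2 h, mul_self_nonneg v.1, mul_self_nonneg v.2]

lemma isLinearMap_dot2 (v : ℝ × ℝ) : IsLinearMap ℝ (dot2 v) :=
  ⟨dot2_add_right v, fun c a => dot2_smul_right v c a⟩

lemma apply_eq_dot2 {F : Type*} [FunLike F (ℝ × ℝ) ℝ] [LinearMapClass F ℝ (ℝ × ℝ) ℝ] (g : F)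
    (x : ℝ × ℝ) : g x = dot2 (g (1, 0), g (0, 1)) x := by
  conv_lhs => rw [show x = x.1 • ((1 : ℝ), (0 : ℝ)) + x.2 • ((0 : ℝ), (1 : ℝ)) by ext <;> simp]
  rw [map_add, map_smul, map_smul, dot2, smul_eq_mul, smul_eq_mul]
  ring

lemma exists_dot2_lt_of_mem_interior {C : Set (ℝ × ℝ)} {u : ℝ × ℝ} (hu : u ∈ interior C)
    {v : ℝ × ℝ} (hv : v ≠ 0) : ∃ c ∈ C, dot2 v c < dot2 v u := by
  have hmove : Filter.Tendsto (fun t : ℝ => u + (-t) • v) (nhds 0) (nhds u) :=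
    (by fun_prop : Continuous fun t : ℝ => u + (-t) • v).tendsto' 0 u (by simp)
  have hnear : ∀ᶠ t in nhdsWithin (0 : ℝ) (Set.Ioi 0), u + (-t) • v ∈ C :=
    nhdsWithin_le_nhds (hmove.eventually (mem_interior_iff_mem_nhds.1 hu))
  obtain ⟨t, htC, ht⟩ := (hnear.and self_mem_nhdsWithin).exists
  refine ⟨_, htC, ?_⟩
  rw [dot2_add_right, dot2_smul_right]
  nlinarith [dot2_self_pos hv, show 0 < t from ht]

lemma mem_quadrant2_of_forall_le_dot2 {C : Set (ℝ × ℝ)} (hC : IsUpperSet C) {c₀ : ℝ × ℝ}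
    (hc₀ : c₀ ∈ C) {v : ℝ × ℝ} {M : ℝ} (hM : ∀ c ∈ C, M ≤ dot2 v c) : v ∈ quadrant2 := by
  have hdir : ∀ e ∈ quadrant2, 0 ≤ dot2 v e := fun e he =>
    nonneg_of_forall_le_add_mul fun t ht => by
      have hle : c₀ ≤ c₀ + t • e :=
        le_add_of_nonneg_right (mem_quadrant2_iff.1 (smul_nonneg ht (mem_quadrant2_iff.1 he) :))
      simpa [dot2_add_right, dot2_smul_right] using hM _ (hC hle hc₀)
  exact ⟨by simpa [dot2] using hdir (1, 0) ⟨zero_le_one, le_rfl⟩,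
    by simpa [dot2] using hdir (0, 1) ⟨le_rfl, zero_le_one⟩⟩

lemma exists_dot2_le_of_notMem_interior {C : Set (ℝ × ℝ)} (hconv : Convex ℝ C)
    (hup : IsUpperSet C) (hne : C.Nonempty) {u : ℝ × ℝ} (hu : u ∉ interior C) :
    ∃ v ∈ quadrant2, v ≠ 0 ∧ ∀ c ∈ C, dot2 v u ≤ dot2 v c := by
  obtain ⟨g, a, hg0, hgC, hgu⟩ := geometric_hahn_banach_of_nonempty_interior hconv
    (convex_singleton u) (Set.disjoint_singleton_right.2 hu) (hup.interior_nonempty hne)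
    (Set.singleton_nonempty u)
  set v : ℝ × ℝ := -(g (1, 0), g (0, 1))
  have hsupport : ∀ c ∈ C, dot2 v u ≤ dot2 v c := fun c hc => by
    simpa only [v, dot2_neg_left, ← apply_eq_dot2, neg_le_neg_iff] using
      (hgC c hc).trans (hgu u rfl)
  obtain ⟨c₀, hc₀⟩ := hne
  refine ⟨v, mem_quadrant2_of_forall_le_dot2 hup hc₀ hsupport, fun hv => hg0 ?_, hsupport⟩
  refine ContinuousLinearMap.ext fun x => ?_
  rw [neg_eq_zero] at hv
  rw [apply_eq_dot2 g x, hv]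
  simp [dot2]

section NewtonPolygon

variable {f : MvPowerSeries (Fin 2) ℂ} {v : ℝ × ℝ}

lemma psupp_eq_image (f : MvPowerSeries (Fin 2) ℂ) :
    psupp f =
      (fun d : Fin 2 →₀ ℕ => ((d 0 : ℝ), (d 1 : ℝ))) '' {d | MvPowerSeries.coeff d f ≠ 0} := by
  ext p
  simp only [psupp, Set.mem_ofPred_eq, Set.mem_image, eq_comm]

lemma psupp_nonempty (hf : f ≠ 0) : (psupp f).Nonempty := by
  obtain ⟨d, hd⟩ : ∃ d, MvPowerSeries.coeff d f ≠ 0 := by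
    by_contra! h
    exact hf (MvPowerSeries.ext h)
  exact ⟨_, d, hd, rfl⟩

-- Dickson's lemma: the exponents form a partially well-ordered set, and `dot2 v` is monotone.
lemma isWF_image_dot2_psupp (hv : v ∈ quadrant2) : (dot2 v '' psupp f).IsWF := by
  rw [psupp_eq_image, Set.image_image]
  refine ((Set.isPWO_of_wellQuasiOrderedLE _).image_of_monotone fun d e hde => ?_).isWF
  have h0 : (d 0 : ℝ) ≤ e 0 := by exact_mod_cast hde 0
  have h1 : (d 1 : ℝ) ≤ e 1 := by exact_mod_cast hde 1
  simp only [dot2]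
  exact add_le_add (mul_le_mul_of_nonneg_left h0 hv.1) (mul_le_mul_of_nonneg_left h1 hv.2)

lemma isLeast_ordV (hf : f ≠ 0) (hv : v ∈ quadrant2) : IsLeast (dot2 v '' psupp f) (ordV v f) := by
  have hwf := isWF_image_dot2_psupp (f := f) hv
  have hne := (psupp_nonempty hf).image (dot2 v)
  have hleast : IsLeast (dot2 v '' psupp f) (hwf.min hne) :=
    ⟨hwf.min_mem hne, fun _ => hwf.min_le hne⟩
  rwa [ordV, hleast.csInf_eq]

lemma subset_newtonPoly (f : MvPowerSeries (Fin 2) ℂ) : psupp f ⊆ newtonPoly f := fun p hp =>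
  ⟨p, subset_convexHull ℝ _ hp, 0, ⟨le_rfl, le_rfl⟩, add_zero p⟩

lemma convex_newtonPoly (f : MvPowerSeries (Fin 2) ℂ) : Convex ℝ (newtonPoly f) :=
  (convex_convexHull ℝ _).add fun _ hx _ hy _ _ ha hb _ =>
    ⟨add_nonneg (mul_nonneg ha hx.1) (mul_nonneg hb hy.1),
      add_nonneg (mul_nonneg ha hx.2) (mul_nonneg hb hy.2)⟩

lemma isUpperSet_newtonPoly (f : MvPowerSeries (Fin 2) ℂ) : IsUpperSet (newtonPoly f) := by
  rintro a b hab ⟨c, hc, q, hq, rfl⟩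
  refine ⟨c, hc, q + (b - (c + q)), ?_, by simp only [← add_assoc, add_sub_cancel]⟩
  exact mem_quadrant2_iff.2 (add_nonneg (mem_quadrant2_iff.1 hq) (sub_nonneg.2 hab))

lemma ordV_le_dot2_of_mem_newtonPoly (hf : f ≠ 0) (hv : v ∈ quadrant2) {u : ℝ × ℝ}
    (hu : u ∈ newtonPoly f) : ordV v f ≤ dot2 v u := by
  obtain ⟨c, hc, q, hq, rfl⟩ := hu
  have hc' : ordV v f ≤ dot2 v c :=
    convexHull_min (fun p hp => (isLeast_ordV hf hv).2 ⟨p, hp, rfl⟩)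
      (convex_halfSpace_ge (isLinearMap_dot2 v) _) hc
  rw [dot2_add_right]
  linarith [dot2_nonneg hv hq]

lemma mul_ordV_le_dot2_of_mem_smul_newtonPoly (hf : f ≠ 0) (hv : v ∈ quadrant2) {ξ : ℝ}
    (hξ : 0 ≤ ξ) {u : ℝ × ℝ} (hu : u ∈ ξ • newtonPoly f) : ξ * ordV v f ≤ dot2 v u := by
  obtain ⟨w, hw, rfl⟩ := hu
  rw [dot2_smul_right]
  exact mul_le_mul_of_nonneg_left (ordV_le_dot2_of_mem_newtonPoly hf hv hw) hξ

end NewtonPolygon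

theorem translated_inclusion_iff_valuations_general (f h : MvPowerSeries (Fin 2) ℂ)
    (hf : f ≠ 0) (hh : h ≠ 0) (lam : ℝ × ℝ)
    (ξ : ℚ) (hξ : 0 < ξ) :
    ((fun u => u + lam) '' newtonPoly h ⊆ interior ((ξ : ℝ) • newtonPoly f)) ↔
      ∀ v ∈ quadrant2, v ≠ 0 → (ξ : ℝ) * ordV v f < ordV v h + dot2 v lam := by
  have hξ' : (0 : ℝ) < ξ := by exact_mod_cast hξ
  constructor
  · intro hsub v hv hv0
    obtain ⟨⟨p, hp, hpv⟩, -⟩ := isLeast_ordV hh hv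
    obtain ⟨c, hc, hlt⟩ :=
      exists_dot2_lt_of_mem_interior (hsub ⟨p, subset_newtonPoly h hp, rfl⟩) hv0
    calc (ξ : ℝ) * ordV v f ≤ dot2 v c := mul_ordV_le_dot2_of_mem_smul_newtonPoly hf hv hξ'.le hc
      _ < dot2 v (p + lam) := hlt
      _ = ordV v h + dot2 v lam := by rw [dot2_add_right, hpv]
  · rintro hval _ ⟨w, hw, rfl⟩
    by_contra hu
    obtain ⟨v, hv, hv0, hsupport⟩ := exists_dot2_le_of_notMem_interior
      ((convex_newtonPoly f).smul _) ((isUpperSet_newtonPoly f).smul_of_pos hξ')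
      ((psupp_nonempty hf).mono (subset_newtonPoly f) |>.smul_set) hu
    obtain ⟨⟨p, hp, hpv⟩, -⟩ := isLeast_ordV hf hv
    have hwp := hsupport _ (Set.smul_mem_smul_set (subset_newtonPoly f hp))
    rw [dot2_smul_right, hpv, dot2_add_right] at hwp
    linarith [ordV_le_dot2_of_mem_newtonPoly hh hv hw, hval v hv hv0]

/-- 𝒩(h) + λ ⊆ Int(ξ·𝒩(f)) iff ord_v(h) + ⟨v,λ⟩ > ξ·ord_v(f) for all nonzero
v ∈ ℝ≥0². -/
theorem translated_inclusion_iff_valuations (f h : MvPowerSeries (Fin 2) ℂ)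
    (hf : f ≠ 0) (hh : h ≠ 0) (lam : ℝ × ℝ) (hlam : lam ∈ quadrant2)
    (ξ : ℚ) (hξ : 0 < ξ) :
    ((fun u => u + lam) '' newtonPoly h ⊆ interior ((ξ : ℝ) • newtonPoly f)) ↔
      ∀ v ∈ quadrant2, v ≠ 0 → (ξ : ℝ) * ordV v f < ordV v h + dot2 v lam :=
  translated_inclusion_iff_valuations_general f h hf hh lam ξ hξ
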